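/- For every n ≥ 0, p₋₁(n) = q·w·p₁(n) in 𝒜; that is, the coefficient of Λ⁻¹ in Lⁿ equals q·e^u times the coefficient of Λ¹ in Lⁿ. -/

import Mathlib

set_option maxHeartbeats 1000000


/- STATEMENT 3.  For the Toda Lax operator L = Λ + v₀ + q·w·Λ⁻¹ ∈ Φ(𝒜) with
Lⁿ = Σ_k p_k(n)Λᵏ: for every n ≥ 0, p₋₁(n) = q·e^u·p₁(n). -/
noncomputable section

/-- variables of `S`: `none` is `q`, `some (inl n)` is `uₙ`, `some (inr n)` is `vₙ`. -/
abbrev Var : Type := Option (ℕ ⊕ ℕ)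

/-- `S = ℚ[q][uₙ, vₙ : n ≥ 0]`. -/
abbrev S : Type := MvPolynomial Var ℚ

/-- `R = S[w,w⁻¹]`, Laurent polynomials in the invertible variable `w` (= `e^u`):
the element `Σ sₙwⁿ` is the finitely supported function `n ↦ sₙ`. -/
abbrev R : Type := AddMonoidAlgebra S ℤ

/-- `𝒜 = R[[ε]][ε⁻¹]`, formal Laurent series in `ε` over `R`. -/
abbrev A : Type := LaurentSeries R

/-- the variable `uₙ`. -/
def uS (n : ℕ) : S := MvPolynomial.X (some (Sum.inl n))

/-- the variable `vₙ`. -/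
def vS (n : ℕ) : S := MvPolynomial.X (some (Sum.inr n))

/-- the variable `q`. -/
def qS : S := MvPolynomial.X none

/-- the derivation of `S` with `∂uₙ = uₙ₊₁`, `∂vₙ = vₙ₊₁`, `∂q = 0`. -/
def dS : Derivation ℚ S S :=
  MvPolynomial.mkDerivation _ fun i =>
    match i with
    | none => 0
    | some j => MvPolynomial.X (some (Sum.map Nat.succ Nat.succ j))

/-- the derivation `∂` of `R`, extending `dS` with `∂w = w·u₁`
(so on `s·wⁿ` it gives `(∂s + n·u₁·s)·wⁿ`). -/
def dR (f : R) : R :=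
  f.coeff.sum fun n s => AddMonoidAlgebra.single n (dS s + n • (uS 1 * s))

lemma dR_zero : dR 0 = 0 := Finsupp.sum_zero_index

/-- a subset of `ℤ` which is bounded below is partially well ordered. -/
lemma bddBelow_isPWO {s : Set ℤ} (h : BddBelow s) : s.IsPWO :=
  Set.IsWF.isPWO (BddBelow.wellFoundedOn_lt h)

/-- apply an operator `T` on `R` with `T 0 = 0` coefficientwise to a Laurent
series in `ε`. -/
def cw (T : R → R) (hT : T 0 = 0) (x : A) : A :=
  ⟨fun i => T (x.coeff i),
   x.isPWO_support'.mono (by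
     intro i hi
     simp only [Function.mem_support] at hi ⊢
     exact fun h0 => hi (by rw [h0, hT]))⟩

/-- `∂` on `𝒜 = R[[ε]][ε⁻¹]` (acting on coefficients; `∂ε = 0`). -/
def dA : A → A := cw dR dR_zero

/-- the upward closure of a p.w.o. subset of `ℤ` is p.w.o. -/
lemma upward_isPWO {s : Set ℤ} (hs : s.IsPWO) : {i : ℤ | ∃ j ∈ s, j ≤ i}.IsPWO := by
  rcases s.eq_empty_or_nonempty with h | h
  · convert Set.isPWO_empty (α := ℤ) using 1
    ext i; simp [h]
  · apply bddBelow_isPWO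
    refine ⟨hs.isWF.min h, ?_⟩
    rintro i ⟨j, hj, hji⟩
    exact le_trans (Set.IsWF.min_le _ h hj) hji

/-- `E^c = exp(cε∂) = Σₘ (cε)ᵐ∂ᵐ/m!`, a well-defined operator on `𝒜` (the sum
is finite in each `ε`-degree). -/
def Ec (c : ℚ) (x : A) : A :=
  ⟨fun i => ∑ᶠ m : ℕ, (c ^ m / (m.factorial : ℚ)) • (dR^[m] (x.coeff (i - m))),
   (upward_isPWO x.isPWO_support').mono (by
      intro i hi
      simp only [Function.mem_support] at hi
      by_contra hcon
      rw [Set.mem_setOf_eq] at hcon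
      push_neg at hcon
      apply hi
      apply finsum_eq_zero_of_forall_eq_zero
      intro m
      have hx : x.coeff (i - m) = 0 := by
        by_contra hx
        exact absurd (hcon (i - m) (Function.mem_support.mpr hx)) (by omega)
      rw [hx, Function.iterate_fixed dR_zero, smul_zero])⟩

/-- `ε ∈ 𝒜`. -/
def epsA : A := HahnSeries.single 1 1

/-- `ε⁻¹ ∈ 𝒜`. -/
def epsInv : A := HahnSeries.single (-1) 1

/-- `∇ = ε⁻¹(E^{1/2} − E^{−1/2})`. -/
def nab (x : A) : A := epsInv * (Ec (1/2) x - Ec (-1/2) x)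

/-- `Δ = E^{1/2} + E^{−1/2}`. -/
def DeltaOp (x : A) : A := Ec (1/2) x + Ec (-1/2) x

/-- `v₀ ∈ R`. -/
def vR : R := AddMonoidAlgebra.single 0 (vS 0)

/-- `u₀ ∈ R`. -/
def uR : R := AddMonoidAlgebra.single 0 (uS 0)

/-- `w ∈ R`. -/
def wR : R := AddMonoidAlgebra.single 1 1

/-- `q·w ∈ R`. -/
def qwR : R := AddMonoidAlgebra.single 1 qS

/-- constants `R ⊆ 𝒜`. -/
def CA (r : R) : A := HahnSeries.single 0 r

/-- twisted Laurent series `Σ_{i ≤ N} aᵢΛⁱ` over `𝒜`, represented by their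
coefficient functions. -/
def Phi : Type := ℤ → A

/-- the twisted product, determined by
`(aΛⁱ)·(bΛʲ) = (E^{−j/2}a)(E^{i/2}b)Λ^{i+j}` (for the elements appearing below
the sum has finite support). -/
def phiMul (a b : Phi) : Phi := fun n =>
  ∑ᶠ i : ℤ, (Ec (-(((n - i) : ℤ) : ℚ) / 2) (a i)) * (Ec (((i : ℤ) : ℚ) / 2) (b (n - i)))

/-- the Lax operator `L = Λ + v₀ + q·w·Λ⁻¹` of the Toda lattice. -/
def LaxT : Phi := fun i =>
  if i = 1 then 1 else if i = 0 then CA vR else if i = -1 then CA qwR else 0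

/-- `1 ∈ Φ(𝒜)`. -/
def onePhi : Phi := fun i => if i = 0 then 1 else 0

/-- `Lⁿ ∈ Φ(𝒜)`. -/
def Lpow (n : ℕ) : Phi := (phiMul LaxT)^[n] onePhi

/-- `p_k(n) ∈ 𝒜`: the coefficient of `Λᵏ` in `Lⁿ`. -/
def p (k : ℤ) (n : ℕ) : A := Lpow n k


lemma body_zero (n : ℤ) : AddMonoidAlgebra.single n (dS 0 + n • (uS 1 * 0)) = (0 : R) := by
  rw [map_zero, mul_zero, smul_zero, add_zero]
  exact AddMonoidAlgebra.single_zero n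

lemma dR_single (n : ℤ) (s : S) :
    dR (AddMonoidAlgebra.single n s) = AddMonoidAlgebra.single n (dS s + n • (uS 1 * s)) := by
  classical
  exact Finsupp.sum_single_index (body_zero n)

lemma dR_add (x y : R) : dR (x + y) = dR x + dR y := by
  classical
  unfold dR
  rw [AddMonoidAlgebra.coeff_add]
  refine Finsupp.sum_add_index' (fun n => body_zero n) ?_
  intro n s t
  rw [map_add, mul_add, smul_add]
  rw [show dS s + dS t + (n • (uS 1 * s) + n • (uS 1 * t))
      = (dS s + n • (uS 1 * s)) + (dS t + n • (uS 1 * t)) by ring]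
  exact AddMonoidAlgebra.single_add n _ _

lemma dR_smul (c : ℚ) (x : R) : dR (c • x) = c • dR x := by
  classical
  unfold dR
  rw [AddMonoidAlgebra.coeff_smul, Finsupp.sum_smul_index' (fun n => body_zero n), Finsupp.smul_sum]
  congr 1
  funext n s
  have hv : dS (c • s) + n • (uS 1 * c • s) = c • (dS s + n • (uS 1 * s)) := by
    rw [dS.map_smul, mul_smul_comm, smul_comm (n : ℤ) c, smul_add]
  rw [hv]
  exact (AddMonoidAlgebra.smul_single c n _).symm

lemma dR_mul (x y : R) : dR (x * y) = dR x * y + x * dR y := by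
  classical
  induction x using AddMonoidAlgebra.induction_linear with
  | zero => simp only [zero_mul, dR_zero, add_zero, mul_zero, zero_add]
  | add f g hf hg => rw [add_mul, dR_add, dR_add, hf, hg, add_mul]; ring
  | single n s =>
    induction y using AddMonoidAlgebra.induction_linear with
    | zero => simp only [mul_zero, dR_zero, add_zero, zero_mul, zero_add]
    | add f g hf hg => rw [mul_add, dR_add, dR_add, hf, hg, mul_add]; ring
    | single m t =>
      have hmul : ∀ (a : ℤ) (b : S) (a' : ℤ) (b' : S),
          (AddMonoidAlgebra.single a b : R) * AddMonoidAlgebra.single a' b'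
            = AddMonoidAlgebra.single (a + a') (b * b') :=
        fun a b a' b' => AddMonoidAlgebra.single_mul_single a a' b b'
      rw [hmul, dR_single, dR_single, dR_single, hmul, hmul]
      rw [← AddMonoidAlgebra.single_add]
      congr 1
      have hd : dS (s * t) = s * dS t + t * dS s := by
        rw [Derivation.leibniz]; rw [smul_eq_mul, smul_eq_mul]
      rw [hd]
      simp only [zsmul_eq_mul, Int.cast_add]
      ring
-- iterates of dR
lemma dR_iter_zero (m : ℕ) : dR^[m] (0 : R) = 0 := Function.iterate_fixed dR_zero m

lemma dR_iter_add (m : ℕ) (x y : R) : dR^[m] (x + y) = dR^[m] x + dR^[m] y := by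
  induction m generalizing x y with
  | zero => rfl
  | succ m ih => rw [Function.iterate_succ_apply, Function.iterate_succ_apply,
      Function.iterate_succ_apply, dR_add, ih]

lemma dR_iter_smul (m : ℕ) (c : ℚ) (x : R) : dR^[m] (c • x) = c • dR^[m] x := by
  induction m generalizing x with
  | zero => rfl
  | succ m ih => rw [Function.iterate_succ_apply, Function.iterate_succ_apply, dR_smul, ih]

lemma dR_nsmul (k : ℕ) (x : R) : dR (k • x) = k • dR x := by
  induction k with
  | zero => simp only [zero_smul, dR_zero]
  | succ k ih => rw [succ_nsmul, succ_nsmul, dR_add, ih]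

lemma dR_sum {α : Type*} (F : Finset α) (f : α → R) :
    dR (∑ a ∈ F, f a) = ∑ a ∈ F, dR (f a) := by
  classical
  induction F using Finset.induction with
  | empty => simpa using dR_zero
  | insert _ _ h ih => rw [Finset.sum_insert h, Finset.sum_insert h, dR_add, ih]

lemma dR_iter_sum {α : Type*} (m : ℕ) (F : Finset α) (f : α → R) :
    dR^[m] (∑ a ∈ F, f a) = ∑ a ∈ F, dR^[m] (f a) := by
  classical
  induction F using Finset.induction with
  | empty => simpa using dR_iter_zero m
  | insert _ _ h ih => rw [Finset.sum_insert h, Finset.sum_insert h, dR_iter_add, ih]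

lemma dR_one : dR (1 : R) = 0 := by
  have h1 : (1 : R) = AddMonoidAlgebra.single 0 1 := rfl
  rw [h1, dR_single]
  have : dS (1 : S) + (0 : ℤ) • (uS 1 * 1) = 0 := by
    rw [Derivation.map_one_eq_zero]; simp
  rw [this]
  exact AddMonoidAlgebra.single_zero 0

lemma dR_iter_one {m : ℕ} (hm : m ≠ 0) : dR^[m] (1 : R) = 0 := by
  obtain ⟨k, rfl⟩ := Nat.exists_eq_succ_of_ne_zero hm
  rw [Function.iterate_succ_apply, dR_one, dR_iter_zero]

lemma dR_iter_mul (x y : R) (n : ℕ) :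
    dR^[n] (x * y) = ∑ k ∈ Finset.range (n + 1), n.choose k • (dR^[n - k] x * dR^[k] y) := by
  induction n with
  | zero => simp
  | succ n IH =>
    calc
      dR^[n + 1] (x * y) =
          dR (∑ k ∈ Finset.range n.succ, n.choose k • (dR^[n - k] x * dR^[k] y)) := by
        rw [Function.iterate_succ_apply', IH]
      _ = (∑ k ∈ Finset.range n.succ, n.choose k • (dR^[n - k + 1] x * dR^[k] y)) +
          ∑ k ∈ Finset.range n.succ, n.choose k • (dR^[n - k] x * dR^[k + 1] y) := by
        rw [dR_sum]
        simp_rw [dR_nsmul, dR_mul, ← Function.iterate_succ_apply' dR,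
          smul_add, Finset.sum_add_distrib]
      _ = (∑ k ∈ Finset.range n.succ,
                n.choose k.succ • (dR^[n - k] x * dR^[k + 1] y)) +
              1 • (dR^[n + 1] x * dR^[0] y) +
            ∑ k ∈ Finset.range n.succ, n.choose k • (dR^[n - k] x * dR^[k + 1] y) := ?_
      _ = ((∑ k ∈ Finset.range n.succ, n.choose k • (dR^[n - k] x * dR^[k + 1] y)) +
              ∑ k ∈ Finset.range n.succ,
                n.choose k.succ • (dR^[n - k] x * dR^[k + 1] y)) +
            1 • (dR^[n + 1] x * dR^[0] y) := by
        rw [add_comm, add_assoc]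
      _ = (∑ i ∈ Finset.range n.succ,
              (n + 1).choose (i + 1) • (dR^[n + 1 - (i + 1)] x * dR^[i + 1] y)) +
            1 • (dR^[n + 1] x * dR^[0] y) := by
        simp_rw [Nat.choose_succ_succ, Nat.succ_sub_succ, add_smul, Finset.sum_add_distrib]
      _ = ∑ k ∈ Finset.range n.succ.succ,
            n.succ.choose k • (dR^[n.succ - k] x * dR^[k] y) := by
        rw [Finset.sum_range_succ' _ n.succ, Nat.choose_zero_right, tsub_zero]
    congr
    refine (Finset.sum_range_succ' _ _).trans (congr_arg₂ (· + ·) ?_ ?_)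
    · rw [Finset.sum_range_succ, Nat.choose_succ_self, zero_smul, add_zero]
      refine Finset.sum_congr rfl fun k hk => ?_
      rw [Finset.mem_range] at hk
      congr
      omega
    · rw [Nat.choose_zero_right, tsub_zero]
-- generic sum helpers
lemma sum_eq_of_support {β : Type*} [AddCommMonoid β] (G : ℤ → β) (s t : Finset ℤ)
    (hs : ∀ j, G j ≠ 0 → j ∈ s) (ht : ∀ j, G j ≠ 0 → j ∈ t) :
    ∑ j ∈ s, G j = ∑ j ∈ t, G j := by
  classical
  have h1 : ∑ j ∈ s ∩ t, G j = ∑ j ∈ s, G j := by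
    apply Finset.sum_subset (Finset.inter_subset_left)
    intro j hjs hjn
    by_contra hG
    exact hjn (Finset.mem_inter.mpr ⟨hjs, ht j hG⟩)
  have h2 : ∑ j ∈ s ∩ t, G j = ∑ j ∈ t, G j := by
    apply Finset.sum_subset (Finset.inter_subset_right)
    intro j hjs hjn
    by_contra hG
    exact hjn (Finset.mem_inter.mpr ⟨hs j hG, hjs⟩)
  rw [← h1, h2]

lemma sum_Icc_shift {β : Type*} [AddCommMonoid β] (G : ℤ → β) (lo hi p : ℤ) :
    ∑ a ∈ Finset.Icc lo hi, G (a - p) = ∑ j ∈ Finset.Icc (lo - p) (hi - p), G j := by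
  have hmap : (Finset.Icc (lo - p) (hi - p)).map (addRightEmbedding p) = Finset.Icc lo hi := by
    rw [Finset.map_add_right_Icc]
    congr 1 <;> omega
  rw [← hmap, Finset.sum_map]
  apply Finset.sum_congr rfl
  intro j _
  congr 1
  simp [addRightEmbedding]

lemma sum_tri {β : Type*} [AddCommMonoid β] (M : ℕ) (G : ℕ → ℕ → β)
    (hG : ∀ p r, M ≤ p + r → G p r = 0) :
    ∑ m ∈ Finset.range M, ∑ p ∈ Finset.range (m + 1), G p (m - p)
      = ∑ p ∈ Finset.range M, ∑ r ∈ Finset.range M, G p r := by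
  classical
  rw [Finset.sum_sigma' (Finset.range M) (fun m => Finset.range (m + 1))
    (fun m p => G p (m - p))]
  rw [← Finset.sum_product' (s := Finset.range M) (t := Finset.range M) (f := fun p r => G p r)]
  rw [← Finset.sum_filter_of_ne (s := Finset.range M ×ˢ Finset.range M)
    (p := fun z => z.1 + z.2 < M) (f := fun z => G z.1 z.2)
    (by intro z _ hz; by_contra hlt; exact hz (hG z.1 z.2 (by omega)))]
  refine Finset.sum_nbij' (fun z => (z.2, z.1 - z.2)) (fun z => ⟨z.1 + z.2, z.1⟩) ?_ ?_ ?_ ?_ ?_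
  · intro a ha
    simp only [Finset.mem_sigma, Finset.mem_range] at ha
    simp only [Finset.mem_filter, Finset.mem_product, Finset.mem_range]
    omega
  · intro a ha
    simp only [Finset.mem_filter, Finset.mem_product, Finset.mem_range] at ha
    simp only [Finset.mem_sigma, Finset.mem_range]
    omega
  · intro a ha
    simp only [Finset.mem_sigma, Finset.mem_range] at ha
    ext <;> simp <;> omega
  · intro a ha
    simp only [Finset.mem_filter, Finset.mem_product, Finset.mem_range] at ha
    ext <;> simp
  · intro a _
    rfl

-- bound lemmas
lemma coeff_bdd (x : A) : ∃ b : ℤ, ∀ j < b, x.coeff j = 0 := by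
  rcases Set.eq_empty_or_nonempty (Function.support x.coeff) with h | h
  · exact ⟨0, fun j _ => by
      by_contra hj
      exact absurd (Function.mem_support.mpr hj) (by rw [h]; exact Set.notMem_empty j)⟩
  · refine ⟨(x.isPWO_support'.isWF).min h, fun j hj => ?_⟩
    by_contra hjne
    exact absurd hj (not_lt.mpr (Set.IsWF.min_le _ h (Function.mem_support.mpr hjne)))

lemma Ec_coeff (c : ℚ) (x : A) (i : ℤ) :
    (Ec c x).coeff i
      = ∑ᶠ m : ℕ, (c ^ m / (m.factorial : ℚ)) • (dR^[m] (x.coeff (i - m))) := rfl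

lemma Ec_coeff_sum (c : ℚ) (x : A) (i : ℤ) {b : ℤ} {N : ℕ}
    (hb : ∀ j < b, x.coeff j = 0) (hN : i - b < N) :
    (Ec c x).coeff i
      = ∑ m ∈ Finset.range N, (c ^ m / (m.factorial : ℚ)) • (dR^[m] (x.coeff (i - m))) := by
  rw [Ec_coeff]
  apply finsum_eq_finset_sum_of_support_subset
  intro m hm
  simp only [Function.mem_support] at hm
  simp only [Finset.coe_range, Set.mem_Iio]
  by_contra hmN
  push_neg at hmN
  apply hm
  have hcast : (N : ℤ) ≤ (m : ℤ) := by exact_mod_cast hmN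
  rw [hb (i - m) (by omega), dR_iter_zero, smul_zero]

lemma Ec_bound (c : ℚ) {x : A} {b : ℤ} (hb : ∀ j < b, x.coeff j = 0) :
    ∀ j < b, (Ec c x).coeff j = 0 := by
  intro j hj
  rw [Ec_coeff]
  apply finsum_eq_zero_of_forall_eq_zero
  intro m
  have : (0:ℤ) ≤ (m:ℤ) := Int.ofNat_nonneg m
  rw [hb (j - m) (by omega), dR_iter_zero, smul_zero]

-- multiplication coefficient with flexible index set
lemma mul_coeff_subset (x y : A) {b1 b2 : ℤ} (hx : ∀ j < b1, x.coeff j = 0)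
    (hy : ∀ j < b2, y.coeff j = 0) (i : ℤ) (F : Finset ℤ)
    (hF : Finset.Icc b1 (i - b2) ⊆ F) :
    (x * y).coeff i = ∑ j ∈ F, x.coeff j * y.coeff (i - j) := by
  classical
  rw [HahnSeries.coeff_mul]
  set AD := Finset.antidiagonal x.isPWO_support y.isPWO_support i with hAD
  have hmem : ∀ ij ∈ AD, x.coeff ij.1 ≠ 0 ∧ y.coeff ij.2 ≠ 0 ∧ ij.1 + ij.2 = i := by
    intro ij hij
    rw [hAD, Finset.mem_addAntidiagonal] at hij
    exact ⟨hij.1, hij.2.1, hij.2.2⟩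
  have himg : ∑ ij ∈ AD, x.coeff ij.1 * y.coeff ij.2
      = ∑ j ∈ AD.image Prod.fst, x.coeff j * y.coeff (i - j) := by
    rw [Finset.sum_image (by
      intro a ha b hb hab
      obtain ⟨_, _, ha3⟩ := hmem a ha
      obtain ⟨_, _, hb3⟩ := hmem b hb
      ext
      · exact hab
      · omega)]
    apply Finset.sum_congr rfl
    intro ij hij
    obtain ⟨_, _, h3⟩ := hmem ij hij
    rw [show i - ij.1 = ij.2 by omega]
  rw [himg]
  apply Finset.sum_subset
  · intro j hj
    simp only [Finset.mem_image] at hj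
    obtain ⟨ij, hij, rfl⟩ := hj
    obtain ⟨h1, h2, h3⟩ := hmem ij hij
    apply hF
    rw [Finset.mem_Icc]
    constructor
    · by_contra hlt; exact h1 (hx ij.1 (by omega))
    · by_contra hlt; exact h2 (hy ij.2 (by omega))
  · intro j hjF hjimg
    by_cases hxj : x.coeff j = 0
    · rw [hxj, zero_mul]
    by_cases hyj : y.coeff (i - j) = 0
    · rw [hyj, mul_zero]
    exfalso
    apply hjimg
    simp only [Finset.mem_image]
    refine ⟨(j, i - j), ?_, rfl⟩
    rw [hAD, Finset.mem_addAntidiagonal]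
    exact ⟨Function.mem_support.mpr hxj, Function.mem_support.mpr hyj, by omega⟩

lemma mul_coeff_bound {x y : A} {b1 b2 : ℤ} (hx : ∀ j < b1, x.coeff j = 0)
    (hy : ∀ j < b2, y.coeff j = 0) : ∀ j < b1 + b2, (x * y).coeff j = 0 := by
  intro j hj
  rw [mul_coeff_subset x y hx hy j (Finset.Icc b1 (j - b2)) (subset_refl _)]
  rw [Finset.Icc_eq_empty (by omega)]
  exact Finset.sum_empty
-- basic Ec lemmas
lemma A_ext {x y : A} (h : ∀ i, x.coeff i = y.coeff i) : x = y := by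
  apply HahnSeries.coeff_inj.mp
  funext i
  exact h i

lemma Ec_of_zero (c : ℚ) : Ec c (0 : A) = 0 := by
  apply A_ext
  intro i
  rw [Ec_coeff]
  simp only [HahnSeries.coeff_zero, dR_iter_zero, smul_zero]
  exact finsum_zero

lemma Ec_exp_zero (x : A) : Ec 0 x = x := by
  apply A_ext
  intro i
  rw [Ec_coeff, finsum_eq_single _ 0 ?_]
  · simp
  · intro m hm
    rw [zero_pow hm, zero_div, zero_smul]

lemma Ec_one (c : ℚ) : Ec c (1 : A) = 1 := by
  apply A_ext
  intro i
  rw [Ec_coeff, finsum_eq_single _ 0 ?_]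
  · simp
  · intro m hm
    rw [HahnSeries.coeff_one]
    by_cases h : (i - (m:ℤ)) = 0
    · rw [if_pos h, dR_iter_one hm, smul_zero]
    · rw [if_neg h, dR_iter_zero, smul_zero]

lemma Ec_add (c : ℚ) (x y : A) : Ec c (x + y) = Ec c x + Ec c y := by
  apply A_ext
  intro i
  obtain ⟨bx, hbx⟩ := coeff_bdd x
  obtain ⟨by', hby⟩ := coeff_bdd y
  set b := min bx by' with hb
  have hx : ∀ j < b, x.coeff j = 0 := fun j hj => hbx j (by omega)
  have hy : ∀ j < b, y.coeff j = 0 := fun j hj => hby j (by omega)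
  have hxy : ∀ j < b, (x + y).coeff j = 0 := by
    intro j hj; rw [HahnSeries.coeff_add, hx j hj, hy j hj, add_zero]
  set N : ℕ := (i - b).toNat + 1 with hN
  have hNb : i - b < N := by
    have := Int.self_le_toNat (i - b); omega
  rw [HahnSeries.coeff_add, Ec_coeff_sum c x i hx hNb, Ec_coeff_sum c y i hy hNb,
    Ec_coeff_sum c (x + y) i hxy hNb, ← Finset.sum_add_distrib]
  apply Finset.sum_congr rfl
  intro m _
  rw [HahnSeries.coeff_add, dR_iter_add, smul_add]

lemma Ec_comp (c d : ℚ) (x : A) : Ec c (Ec d x) = Ec (c + d) x := by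
  apply A_ext
  intro i
  obtain ⟨b, hbx⟩ := coeff_bdd x
  have hEd : ∀ j < b, (Ec d x).coeff j = 0 := Ec_bound d hbx
  set K : ℕ := (i - b).toNat + 1 with hK
  have hKb : i - b < K := by
    have := Int.self_le_toNat (i - b); omega
  have hKb2 : i - b < (2*K : ℕ) := by push_cast; omega
  rw [Ec_coeff_sum c (Ec d x) i hEd hKb, Ec_coeff_sum (c + d) x i hbx hKb2]
  have hinner : ∀ m ∈ Finset.range K,
      (c ^ m / (m.factorial : ℚ)) • (dR^[m] ((Ec d x).coeff (i - m)))
      = ∑ l ∈ Finset.range K, (c ^ m / (m.factorial : ℚ) * (d ^ l / (l.factorial : ℚ)))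
          • (dR^[m + l] (x.coeff (i - m - l))) := by
    intro m _
    rw [Ec_coeff_sum d x (i - m) hbx (by omega : (i - (m:ℤ)) - b < K)]
    rw [dR_iter_sum, Finset.smul_sum]
    apply Finset.sum_congr rfl
    intro l _
    rw [dR_iter_smul, smul_smul, Function.iterate_add_apply]
  rw [Finset.sum_congr rfl hinner]
  set G : ℕ → ℕ → R := fun p r =>
    (c ^ p * d ^ r / ((p.factorial : ℚ) * (r.factorial : ℚ)))
      • (dR^[p + r] (x.coeff (i - p - r))) with hG
  have hzero : ∀ p r : ℕ, K ≤ p + r → G p r = 0 := by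
    intro p r hpr
    have hc : ((p:ℤ) + r) ≥ K := by exact_mod_cast hpr
    rw [hG]
    simp only []
    rw [hbx (i - p - r) (by omega), dR_iter_zero, smul_zero]
  have hstep1 : ∀ m ∈ Finset.range K,
      ∑ l ∈ Finset.range K, (c ^ m / (m.factorial : ℚ) * (d ^ l / (l.factorial : ℚ)))
          • (dR^[m + l] (x.coeff (i - m - l))) = ∑ l ∈ Finset.range (2*K), G m l := by
    intro m _
    have e1 : ∑ l ∈ Finset.range K, (c ^ m / (m.factorial : ℚ) * (d ^ l / (l.factorial : ℚ)))
          • (dR^[m + l] (x.coeff (i - m - l))) = ∑ l ∈ Finset.range K, G m l := by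
      apply Finset.sum_congr rfl
      intro l _
      rw [hG]
      congr 1
      ring
    rw [e1]
    exact Finset.sum_subset (Finset.range_subset_range.mpr (by omega : K ≤ 2*K))
      (fun l _ hl => hzero m l (by simp only [Finset.mem_range] at hl; omega))
  rw [Finset.sum_congr rfl hstep1]
  rw [Finset.sum_subset (Finset.range_subset_range.mpr (by omega : K ≤ 2*K))
      (fun m _ hm => Finset.sum_eq_zero
        (fun l _ => hzero m l (by simp only [Finset.mem_range] at hm; omega)))]
  rw [← sum_tri (2*K) G (fun p r h => hzero p r (by omega))]
  apply Finset.sum_congr rfl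
  intro n _
  rw [add_pow, Finset.sum_div, Finset.sum_smul]
  apply Finset.sum_congr rfl
  intro p hp
  rw [Finset.mem_range] at hp
  have hpn : p ≤ n := by omega
  have h1 : p + (n - p) = n := by omega
  have h2 : i - (p:ℤ) - ((n - p : ℕ):ℤ) = i - n := by omega
  rw [hG]
  simp only []
  rw [h1, h2]
  congr 1
  have hfac : (n.choose p : ℚ) * (p.factorial : ℚ) * ((n - p).factorial : ℚ)
      = (n.factorial : ℚ) := by
    exact_mod_cast congrArg (Nat.cast : ℕ → ℚ)
      (Nat.choose_mul_factorial_mul_factorial hpn)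
  have hp0 : (p.factorial : ℚ) ≠ 0 := Nat.cast_ne_zero.mpr (Nat.factorial_ne_zero p)
  have hr0 : ((n - p).factorial : ℚ) ≠ 0 := Nat.cast_ne_zero.mpr (Nat.factorial_ne_zero _)
  have hn0 : (n.factorial : ℚ) ≠ 0 := Nat.cast_ne_zero.mpr (Nat.factorial_ne_zero n)
  field_simp
  rw [← hfac]
  ring
lemma Ec_mul (c : ℚ) (x y : A) : Ec c (x * y) = Ec c x * Ec c y := by
  apply A_ext
  intro i
  obtain ⟨bx, hxb⟩ := coeff_bdd x
  obtain ⟨b2, hyb⟩ := coeff_bdd y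
  set M : ℕ := (i - bx - b2).toNat + 1 with hM
  have hMi : i - bx - b2 < (M:ℤ) := by
    have := Int.self_le_toNat (i - bx - b2); omega
  set K : ℕ := 2 * M with hKdef
  have hKM : (K:ℤ) = 2 * (M:ℤ) := by push_cast; omega
  set J : Finset ℤ := Finset.Icc (bx - M) (i - b2) with hJ
  set H : ℕ → ℕ → ℤ → R := fun p r j =>
    ((c ^ p / (p.factorial : ℚ)) • dR^[p] (x.coeff j))
      * ((c ^ r / (r.factorial : ℚ)) • dR^[r] (y.coeff (i - j - p - r))) with hH
  have hH0 : ∀ (p r : ℕ) (j : ℤ), (j < bx ∨ i - j - p - r < b2) → H p r j = 0 := by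
    intro p r j hj
    simp only [hH]
    rcases hj with hj | hj
    · rw [hxb j hj, dR_iter_zero, smul_zero, zero_mul]
    · rw [hyb _ hj, dR_iter_zero, smul_zero, mul_zero]
  have hHsupp : ∀ (p r : ℕ) (j : ℤ), H p r j ≠ 0 → bx ≤ j ∧ j ≤ i - b2 - p - r := by
    intro p r j hne
    constructor
    · by_contra hc; exact hne (hH0 p r j (Or.inl (by omega)))
    · by_contra hc; exact hne (hH0 p r j (Or.inr (by omega)))
  set G : ℕ → ℕ → R := fun p r => ∑ j ∈ J, H p r j with hG
  have hG0 : ∀ p r : ℕ, M ≤ p + r → G p r = 0 := by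
    intro p r hpr
    rw [hG]
    apply Finset.sum_eq_zero
    intro j hjJ
    rw [Finset.mem_Icc] at hjJ
    by_cases hjx : j < bx
    · exact hH0 p r j (Or.inl hjx)
    · apply hH0 p r j
      right
      have : (M:ℤ) ≤ (p:ℤ) + (r:ℤ) := by exact_mod_cast hpr
      omega
  -- bound for x*y
  have hxyb : ∀ j < bx + b2, (x * y).coeff j = 0 := mul_coeff_bound hxb hyb
  -- LHS
  have hL : (Ec c (x * y)).coeff i = ∑ p ∈ Finset.range K, ∑ r ∈ Finset.range K, G p r := by
    rw [Ec_coeff_sum c (x * y) i hxyb (by omega : i - (bx + b2) < (K:ℤ))]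
    have hstep : ∀ m ∈ Finset.range K,
        (c ^ m / (m.factorial : ℚ)) • dR^[m] ((x * y).coeff (i - m))
          = ∑ p ∈ Finset.range (m + 1), G p (m - p) := by
      intro m _
      rw [mul_coeff_subset x y hxb hyb (i - m) J
        (by rw [hJ]; exact Finset.Icc_subset_Icc (by omega) (by omega))]
      rw [dR_iter_sum, Finset.smul_sum]
      have hterm : ∀ j ∈ J,
          (c ^ m / (m.factorial : ℚ)) • dR^[m] (x.coeff j * y.coeff (i - m - j))
            = ∑ k ∈ Finset.range (m + 1), H (m - k) k j := by
        intro j _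
        rw [dR_iter_mul, Finset.smul_sum]
        apply Finset.sum_congr rfl
        intro k hk
        rw [Finset.mem_range] at hk
        have hkm : k ≤ m := by omega
        simp only [hH]
        have hidx : i - j - ((m - k : ℕ):ℤ) - (k:ℤ) = i - m - j := by
          have : ((m - k : ℕ):ℤ) = (m:ℤ) - k := by omega
          omega
        rw [hidx]
        rw [smul_mul_smul_comm]
        rw [← Nat.cast_smul_eq_nsmul ℚ (m.choose k), smul_smul]
        congr 1
        have hfac : (m.choose k : ℚ) * (k.factorial : ℚ) * ((m - k).factorial : ℚ)
            = (m.factorial : ℚ) := by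
          exact_mod_cast congrArg (Nat.cast : ℕ → ℚ)
            (Nat.choose_mul_factorial_mul_factorial hkm)
        have hpow : c ^ m = c ^ (m - k) * c ^ k := by
          rw [← pow_add]; congr 1; omega
        have hk0 : (k.factorial : ℚ) ≠ 0 := Nat.cast_ne_zero.mpr (Nat.factorial_ne_zero k)
        have hmk0 : ((m - k).factorial : ℚ) ≠ 0 := Nat.cast_ne_zero.mpr (Nat.factorial_ne_zero _)
        have hm0 : (m.factorial : ℚ) ≠ 0 := Nat.cast_ne_zero.mpr (Nat.factorial_ne_zero m)
        field_simp
        rw [← hfac, hpow]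
        ring
      rw [Finset.sum_congr rfl hterm, Finset.sum_comm]
      -- now: ∑ k ∈ range (m+1), ∑ j ∈ J, H (m-k) k j = ∑ p ∈ range (m+1), G p (m-p)
      have hrefl := Finset.sum_range_reflect (fun k => G k (m - k)) (m + 1)
      rw [← hrefl]
      apply Finset.sum_congr rfl
      intro k hk
      rw [Finset.mem_range] at hk
      rw [hG]
      have h1 : m + 1 - 1 - k = m - k := by omega
      have h2 : m - (m - k) = k := by omega
      rw [h1, h2]
    rw [Finset.sum_congr rfl hstep]
    exact sum_tri K G (fun p r h => hG0 p r (by omega))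
  -- RHS
  have hR : (Ec c x * Ec c y).coeff i = ∑ p ∈ Finset.range K, ∑ r ∈ Finset.range K, G p r := by
    rw [mul_coeff_subset (Ec c x) (Ec c y) (Ec_bound c hxb) (Ec_bound c hyb) i J
      (by rw [hJ]; exact Finset.Icc_subset_Icc (by omega) (by omega))]
    have hstep : ∀ a ∈ J,
        (Ec c x).coeff a * (Ec c y).coeff (i - a)
          = ∑ p ∈ Finset.range K, ∑ r ∈ Finset.range K, H p r (a - p) := by
      intro a haJ
      rw [hJ, Finset.mem_Icc] at haJ
      rw [Ec_coeff_sum c x a hxb (by omega : a - bx < (K:ℤ)),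
        Ec_coeff_sum c y (i - a) hyb (by omega : i - a - b2 < (K:ℤ)),
        Finset.sum_mul_sum]
      apply Finset.sum_congr rfl
      intro p _
      apply Finset.sum_congr rfl
      intro r _
      simp only [hH]
      rw [show i - (a - (p:ℤ)) - (p:ℤ) - (r:ℤ) = i - a - r by omega]
    rw [Finset.sum_congr rfl hstep]
    rw [Finset.sum_comm]
    apply Finset.sum_congr rfl
    intro p _
    rw [Finset.sum_comm]
    apply Finset.sum_congr rfl
    intro r _
    -- ∑ a ∈ J, H p r (a - p) = G p r
    rw [hJ, sum_Icc_shift (H p r) (bx - M) (i - b2) (p:ℤ), hG]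
    apply sum_eq_of_support
    · intro j hne
      have := hHsupp p r j hne
      rw [Finset.mem_Icc]
      have hp0 : (0:ℤ) ≤ (p:ℤ) := Int.ofNat_nonneg p
      have hr0 : (0:ℤ) ≤ (r:ℤ) := Int.ofNat_nonneg r
      omega
    · intro j hne
      have := hHsupp p r j hne
      rw [hJ, Finset.mem_Icc]
      have hp0 : (0:ℤ) ≤ (p:ℤ) := Int.ofNat_nonneg p
      have hr0 : (0:ℤ) ≤ (r:ℤ) := Int.ofNat_nonneg r
      omega
  rw [hL, hR]
lemma Lpow_succ (n : ℕ) : Lpow (n + 1) = phiMul LaxT (Lpow n) := by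
  unfold Lpow
  rw [Function.iterate_succ_apply']

lemma LaxT_one : LaxT 1 = 1 := by norm_num [LaxT]
lemma LaxT_zero : LaxT 0 = CA vR := by norm_num [LaxT]
lemma LaxT_negone : LaxT (-1) = CA qwR := by norm_num [LaxT]
lemma LaxT_other (i : ℤ) (h1 : i ≠ 1) (h0 : i ≠ 0) (hm : i ≠ -1) : LaxT i = 0 := by
  simp [LaxT, h1, h0, hm]

lemma phiMul_LaxT (b : Phi) (k : ℤ) :
    phiMul LaxT b k = Ec (1/2) (b (k-1)) + Ec (-(k:ℚ)/2) (CA vR) * b k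
      + Ec (-((k:ℚ)+1)/2) (CA qwR) * Ec (-(1/2)) (b (k+1)) := by
  classical
  have hre : phiMul LaxT b k
      = ∑ᶠ i : ℤ, (Ec (-(((k - i) : ℤ) : ℚ) / 2) (LaxT i)) * (Ec (((i : ℤ) : ℚ) / 2) (b (k - i))) := rfl
  rw [hre]
  rw [finsum_eq_finset_sum_of_support_subset _
    (s := ({1, 0, -1} : Finset ℤ)) ?_]
  · rw [show ({1, 0, -1} : Finset ℤ) = insert 1 (insert 0 {-1}) from rfl]
    rw [Finset.sum_insert (by decide), Finset.sum_insert (by decide), Finset.sum_singleton]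
    rw [LaxT_one, LaxT_zero, LaxT_negone, Ec_one, one_mul]
    have e1 : (((1:ℤ)):ℚ)/2 = 1/2 := by norm_num
    have e2 : (((0:ℤ)):ℚ)/2 = 0 := by norm_num
    have e3 : (((-1:ℤ)):ℚ)/2 = -(1/2) := by norm_num
    have e4 : -(((k - 0):ℤ):ℚ)/2 = -(k:ℚ)/2 := by push_cast; ring
    have e5 : -(((k - (-1)):ℤ):ℚ)/2 = -((k:ℚ)+1)/2 := by push_cast; ring
    rw [e1, e2, e3, e4, e5, Ec_exp_zero, sub_zero, sub_neg_eq_add]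
    ring
  · intro i hi
    simp only [Function.mem_support] at hi
    simp only [Finset.coe_insert, Set.mem_insert_iff, Finset.coe_singleton,
      Set.mem_singleton_iff]
    by_contra hcon
    push_neg at hcon
    apply hi
    rw [LaxT_other i hcon.1 hcon.2.1 hcon.2.2, Ec_of_zero, zero_mul]

lemma onePhi_zero : onePhi 0 = 1 := rfl
lemma onePhi_ne {k : ℤ} (h : k ≠ 0) : onePhi k = 0 := by simp [onePhi, h]
lemma Lpow_zero : Lpow 0 = onePhi := rfl
lemma rightRec : ∀ (n : ℕ) (k : ℤ),
    Lpow (n+1) k = Ec (-(1/2)) (Lpow n (k-1)) + Lpow n k * Ec ((k:ℚ)/2) (CA vR)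
      + Ec (1/2) (Lpow n (k+1)) * Ec (((k:ℚ)+1)/2) (CA qwR) := by
  intro n
  induction n with
  | zero =>
    intro k
    rw [Lpow_succ, Lpow_zero, phiMul_LaxT]
    by_cases hk1 : k = 1
    · subst hk1
      norm_num [onePhi_ne, onePhi_zero, Ec_of_zero, Ec_one]
    by_cases hk0 : k = 0
    · subst hk0
      norm_num [onePhi_ne, onePhi_zero, Ec_of_zero, Ec_one, Ec_exp_zero]
    by_cases hkm : k = -1
    · subst hkm
      norm_num [onePhi_ne, onePhi_zero, Ec_of_zero, Ec_one, Ec_exp_zero]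
    · have h1 : k - 1 ≠ 0 := by omega
      have h2 : k + 1 ≠ 0 := by omega
      rw [onePhi_ne h1, onePhi_ne h2, onePhi_ne hk0]
      simp [Ec_of_zero]
  | succ n IH =>
    intro k
    rw [Lpow_succ (n+1), phiMul_LaxT]
    conv_lhs => rw [IH (k-1), IH k, IH (k+1)]
    conv_rhs => rw [Lpow_succ n, phiMul_LaxT (Lpow n) (k-1), phiMul_LaxT (Lpow n) k,
      phiMul_LaxT (Lpow n) (k+1)]
    push_cast
    simp only [Ec_add, Ec_mul, Ec_comp]
    push_cast
    ring_nf
def Qc : ℕ → A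
  | 0 => 1
  | (k+1) => Ec ((k:ℚ)/2) (CA qwR) * Ec (-(1/2)) (Qc k)

lemma symmInv : ∀ (n : ℕ) (k : ℕ), Lpow n (-(k:ℤ)) = Qc k * Lpow n (k:ℤ) := by
  intro n
  induction n with
  | zero =>
    intro k
    cases k with
    | zero => rw [Lpow_zero]; norm_num [Qc]
    | succ j =>
      rw [Lpow_zero, onePhi_ne (by push_cast; omega : -((j+1:ℕ):ℤ) ≠ 0),
        onePhi_ne (by push_cast; omega : ((j+1:ℕ):ℤ) ≠ 0), mul_zero]
  | succ n IH =>
    intro k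
    cases k with
    | zero => norm_num [Qc]
    | succ j =>
      rw [rightRec n ((j+1:ℕ):ℤ)]
      rw [Lpow_succ, phiMul_LaxT]
      have e1 : (-((j+1:ℕ):ℤ) - 1 : ℤ) = -((j+2:ℕ):ℤ) := by push_cast; ring
      have e2 : (-((j+1:ℕ):ℤ) + 1 : ℤ) = -((j:ℕ):ℤ) := by push_cast; ring
      rw [e1, e2, IH (j+2), IH (j+1), IH j]
      have e3 : (((j+1:ℕ):ℤ) - 1 : ℤ) = ((j:ℕ):ℤ) := by push_cast; ring
      have e4 : (((j+1:ℕ):ℤ) + 1 : ℤ) = ((j+2:ℕ):ℤ) := by push_cast; ring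
      rw [e3, e4]
      rw [show Qc (j+2) = Ec (((j+1:ℕ):ℚ)/2) (CA qwR) * Ec (-(1/2)) (Qc (j+1)) from rfl,
          show Qc (j+1) = Ec (((j:ℕ):ℚ)/2) (CA qwR) * Ec (-(1/2)) (Qc j) from rfl]
      push_cast
      simp only [Ec_add, Ec_mul, Ec_comp]
      push_cast
      ring_nf
theorem toda_pminus_one (n : ℕ) : p (-1) n = CA qwR * p 1 n := by
  have h := symmInv n 1
  have hq : Qc 1 = CA qwR := by
    rw [show Qc 1 = Ec (((0:ℕ):ℚ)/2) (CA qwR) * Ec (-(1/2)) (Qc 0) from rfl,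
      show Qc 0 = 1 from rfl, Ec_one, mul_one]
    norm_num [Ec_exp_zero]
  show Lpow n (-1) = CA qwR * Lpow n 1
  rw [hq] at h
  exact_mod_cast h

end
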